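/- Let X be an irreducible SFT, x₀ ∈ X, and G_{X,x₀} its absolute Galois group. For every open normal subgroup N of G_{X,x₀} there exists a pointed Galois factor (Z, z₀, ϖ) over (X, x₀), unique up to pointed conjugacy over X, such that Gal(Z/X, ϖ) ≅ G_{X,x₀}/N, with the natural projection G_{X,x₀} → Gal(Z/X, ϖ) having kernel N. -/

import Mathlib

open Function Set

/-- The shift map on bi-infinite sequences. -/
def shiftMap (A : Type*) : (ℤ → A) → (ℤ → A) := fun x i => x (i + 1)

/-- A (two-sided) subshift over an alphabet `A`: a closed, shift-invariant subset of the
full shift `A^ℤ` on which the shift is onto. -/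
structure Subshift (A : Type*) [TopologicalSpace A] where
  carrier : Set (ℤ → A)
  isClosed' : IsClosed carrier
  shift_mem' : ∀ x ∈ carrier, shiftMap A x ∈ carrier
  shift_surjOn' : ∀ x ∈ carrier, ∃ y ∈ carrier, shiftMap A y = x

/-- The shift map restricted to a subshift. -/
def Subshift.σ {A : Type*} [TopologicalSpace A] (X : Subshift A) : X.carrier → X.carrier :=
  fun x => ⟨shiftMap A x.1, X.shift_mem' x.1 x.2⟩

/-- `X` is a shift of finite type: membership is determined by a finite-window rule. -/
def Subshift.IsSFT {A : Type*} [TopologicalSpace A] (X : Subshift A) : Prop :=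
  ∃ (n : ℕ) (W : Set (Fin n → A)),
    X.carrier = {x | ∀ i : ℤ, (fun k : Fin n => x (i + (k.val : ℤ))) ∈ W}

/-- Irreducibility (= topological transitivity) of a subshift. -/
def Subshift.Irreducible {A : Type*} [TopologicalSpace A] (X : Subshift A) : Prop :=
  ∀ U V : Set X.carrier, IsOpen U → IsOpen V → U.Nonempty → V.Nonempty →
    ∃ n : ℕ, (X.σ^[n] '' U ∩ V).Nonempty

/-- A factor map between subshifts: a continuous, shift-commuting surjection. -/
structure IsFactorMap {A B : Type*} [TopologicalSpace A] [TopologicalSpace B]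
    (Y : Subshift B) (X : Subshift A) (ϖ : Y.carrier → X.carrier) : Prop where
  continuous : Continuous ϖ
  commutes : ∀ y, ϖ (Y.σ y) = X.σ (ϖ y)
  surjective : Function.Surjective ϖ

/-- An unramified (constant-to-one) factor map of degree `d`. -/
def IsUnramified {A B : Type*} [TopologicalSpace A] [TopologicalSpace B]
    (Y : Subshift B) (X : Subshift A) (ϖ : Y.carrier → X.carrier) (d : ℕ) : Prop :=
  IsFactorMap Y X ϖ ∧ ∀ x : X.carrier, (ϖ ⁻¹' {x}).Finite ∧ (ϖ ⁻¹' {x}).ncard = d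

/-- The relative automorphism group `Aut(Y/X, ϖ)`: shift-commuting self-homeomorphisms of `Y`
over `X`. -/
def relAut {A B : Type*} [TopologicalSpace A] [TopologicalSpace B]
    (Y : Subshift B) (X : Subshift A) (ϖ : Y.carrier → X.carrier) :
    Subgroup (Equiv.Perm Y.carrier) where
  carrier := {φ | Continuous φ ∧ Continuous (φ⁻¹ : Equiv.Perm Y.carrier) ∧
    (∀ y, φ (Y.σ y) = Y.σ (φ y)) ∧ ∀ y, ϖ (φ y) = ϖ y}
  one_mem' := ⟨by simpa using continuous_id, by simpa using continuous_id,
    fun _ => by simp, fun _ => by simp⟩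
  mul_mem' := by
    rintro φ ψ ⟨hc, hci, hcomm, hrel⟩ ⟨hc', hci', hcomm', hrel'⟩
    refine ⟨?_, ?_, fun y => ?_, fun y => ?_⟩
    · simpa [Equiv.Perm.coe_mul] using hc.comp hc'
    · simpa [mul_inv_rev, Equiv.Perm.coe_mul] using hci'.comp hci
    · simp [Equiv.Perm.mul_apply, hcomm, hcomm']
    · simp [Equiv.Perm.mul_apply, hrel, hrel']
  inv_mem' := by
    rintro φ ⟨hc, hci, hcomm, hrel⟩
    refine ⟨hci, by simpa using hc, fun y => φ.injective ?_, fun y => ?_⟩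
    · simp [hcomm, (show ∀ x, φ (φ⁻¹ x) = x from fun x => by rw [← Equiv.Perm.mul_apply, mul_inv_cancel, Equiv.Perm.one_apply])]
    · conv_rhs => rw [← (show ∀ x, φ (φ⁻¹ x) = x from fun x => by rw [← Equiv.Perm.mul_apply, mul_inv_cancel, Equiv.Perm.one_apply]) y]
      exact (hrel _).symm

/-- A pointed Galois factor of degree `d` over a pointed subshift `(X, x₀)`. -/
def IsPointedGaloisFactor {A B : Type*} [TopologicalSpace A] [TopologicalSpace B]
    (Y : Subshift B) (y₀ : Y.carrier) (X : Subshift A) (x₀ : X.carrier)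
    (ϖ : Y.carrier → X.carrier) (d : ℕ) : Prop :=
  Y.IsSFT ∧ Y.Irreducible ∧ ϖ y₀ = x₀ ∧ IsUnramified Y X ϖ d ∧
    Nat.card (relAut Y X ϖ) = d

/-- The full shift on an alphabet `A`. -/
def fullShift (A : Type*) [TopologicalSpace A] : Subshift A where
  carrier := Set.univ
  isClosed' := isClosed_univ
  shift_mem' := fun _ _ => Set.mem_univ _
  shift_surjOn' := fun x _ => ⟨fun i => x (i - 1), Set.mem_univ _, by
    funext i; simp [shiftMap]⟩

/-- The inverse limit of a projective system of groups, as a subgroup of the product. -/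
def limitSubgroup {ι : Type*} [Preorder ι] (G : ι → Type*) [∀ i, Group (G i)]
    (p : ∀ i j, i ≤ j → (G j →* G i)) : Subgroup (∀ i, G i) where
  carrier := {g | ∀ (i j : ι) (h : i ≤ j), p i j h (g j) = g i}
  one_mem' := fun i j h => by simp
  mul_mem' := by
    intro a b ha hb i j h
    simp [ha i j h, hb i j h]
  inv_mem' := by
    intro a ha i j h
    simp [ha i j h]

set_option linter.unusedSectionVars false
set_option linter.unreachableTactic false
set_option linter.unusedTactic false

/-! ### Auxiliary shift machinery -/

section ShiftLemmas

variable {B C : Type*} [TopologicalSpace B] [TopologicalSpace C]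

/-- Shift by `k` on bi-infinite sequences. -/
def sby (k : ℤ) (x : ℤ → B) : ℤ → B := fun i => x (i + k)

lemma sby_sby (k l : ℤ) (x : ℤ → B) : sby k (sby l x) = sby (k + l) x :=
  funext fun i => congrArg x (by ring)

lemma sby_zero (x : ℤ → B) : sby 0 x = x := funext fun i => congrArg x (add_zero i)

lemma shiftMap_eq_sby : shiftMap B = sby 1 := rfl

lemma sby_mem (Y : Subshift B) (k : ℤ) : ∀ x ∈ Y.carrier, sby k x ∈ Y.carrier := by
  induction k using Int.induction_on with
  | zero => intro x hx; rw [sby_zero]; exact hx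
  | succ k ih =>
      intro x hx
      have h1 : sby ((k : ℤ) + 1) x = sby k (shiftMap B x) := by
        funext i; show x (i + (k + 1)) = x (i + k + 1); exact congrArg x (by ring)
      rw [h1]; exact ih _ (Y.shift_mem' x hx)
  | pred k ih =>
      intro x hx
      obtain ⟨y, hy, hyx⟩ := Y.shift_surjOn' x hx
      have h1 : sby (-1 : ℤ) x = y := by
        funext i
        show x (i + (-1)) = y i
        rw [← hyx]
        show y (i + (-1) + 1) = y i
        exact congrArg y (by ring)
      have h2 : sby (-(k : ℤ) - 1) x = sby (-(k : ℤ)) (sby (-1) x) := by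
        rw [sby_sby]; congr 1 <;> ring
      rw [h2, h1]; exact ih _ hy

/-- Shift by `k` as a self-map of a subshift. -/
def Subshift.spt (Y : Subshift B) (k : ℤ) (u : Y.carrier) : Y.carrier :=
  ⟨sby k u.val, sby_mem Y k u.val u.2⟩

@[simp] lemma Subshift.spt_val (Y : Subshift B) (k : ℤ) (u : Y.carrier) (i : ℤ) :
    (Y.spt k u).val i = u.val (i + k) := rfl

lemma Subshift.spt_spt (Y : Subshift B) (k l : ℤ) (u : Y.carrier) :
    Y.spt k (Y.spt l u) = Y.spt (k + l) u := Subtype.ext (sby_sby k l u.val)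

lemma Subshift.spt_zero (Y : Subshift B) (u : Y.carrier) : Y.spt 0 u = u :=
  Subtype.ext (sby_zero u.val)

lemma Subshift.sigma_eq_spt (Y : Subshift B) (u : Y.carrier) : Y.σ u = Y.spt 1 u := rfl

lemma Subshift.spt_injective (Y : Subshift B) (k : ℤ) : Function.Injective (Y.spt k) := by
  intro u v h
  have := congrArg (Y.spt (-k)) h
  rwa [Y.spt_spt, Y.spt_spt, neg_add_cancel, Y.spt_zero, Y.spt_zero] at this

lemma Subshift.iterate_sigma (Y : Subshift B) (n : ℕ) (u : Y.carrier) :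
    Y.σ^[n] u = Y.spt n u := by
  induction n with
  | zero => simp [Y.spt_zero]
  | succ n ih =>
      rw [Function.iterate_succ_apply', ih, Y.sigma_eq_spt, Y.spt_spt]
      congr 1
      push_cast; ring

/-- A continuous shift-commuting map commutes with all shifts. -/
lemma comm_spt {Y : Subshift B} {Z : Subshift C} (f : Y.carrier → Z.carrier)
    (hcomm : ∀ u, f (Y.σ u) = Z.σ (f u)) (k : ℤ) (u : Y.carrier) :
    f (Y.spt k u) = Z.spt k (f u) := by
  have h1 : ∀ u, f (Y.spt 1 u) = Z.spt 1 (f u) := by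
    intro u; rw [← Y.sigma_eq_spt, ← Z.sigma_eq_spt]; exact hcomm u
  induction k using Int.induction_on generalizing u with
  | zero => rw [Y.spt_zero, Z.spt_zero]
  | succ k ih =>
      have e1 : Y.spt ((k : ℤ) + 1) u = Y.spt k (Y.spt 1 u) := by rw [Y.spt_spt]
      rw [e1, ih, h1, Z.spt_spt]
  | pred k ih =>
      have e1 : Y.spt 1 (Y.spt (-(k : ℤ) - 1) u) = Y.spt (-(k : ℤ)) u := by
        rw [Y.spt_spt]; congr 1 <;> ring
      have e2 : Z.spt 1 (f (Y.spt (-(k : ℤ) - 1) u)) = Z.spt 1 (Z.spt (-(k : ℤ) - 1) (f u)) := by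
        rw [← h1, e1, ih, Z.spt_spt]
        congr 1 <;> ring
      exact Z.spt_injective 1 e2

end ShiftLemmas

/-! ### Window determinism, cylinders, irreducibility -/

section WindowLemmas

variable {B C : Type*} [TopologicalSpace B] [DiscreteTopology B] [Finite B]
  [TopologicalSpace C]

lemma Subshift.compactSpace (Y : Subshift B) : CompactSpace Y.carrier :=
  isCompact_iff_compactSpace.mp Y.isClosed'.isCompact

/-- A continuous map from a subshift to a discrete space is determined by a finite window. -/
lemma exists_radius_zero [DiscreteTopology C] (Y : Subshift B) (g : Y.carrier → C)
    (hg : Continuous g) :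
    ∃ s : ℕ, ∀ u v : Y.carrier, (∀ i : ℤ, -(s : ℤ) ≤ i → i ≤ s → u.val i = v.val i) →
      g u = g v := by
  have key : ∀ u : Y.carrier, ∃ I : Finset ℤ,
      ∀ v : Y.carrier, (∀ i ∈ I, v.val i = u.val i) → g v = g u := by
    intro u
    have hopen : IsOpen (g ⁻¹' {g u}) := (isOpen_discrete _).preimage hg
    rw [isOpen_induced_iff] at hopen
    obtain ⟨U, hU, hUeq⟩ := hopen
    have humem : u.val ∈ U := by
      have : u ∈ Subtype.val ⁻¹' U := by rw [hUeq]; exact rfl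
      exact this
    rw [isOpen_pi_iff] at hU
    obtain ⟨I, w, hw, hsub⟩ := hU u.val humem
    refine ⟨I, fun v hv => ?_⟩
    have hvU : v.val ∈ U := by
      apply hsub
      intro i hi
      rw [hv i hi]
      exact (hw i hi).2
    have : v ∈ Subtype.val ⁻¹' U := hvU
    rw [hUeq] at this
    exact this
  choose I hI using key
  have : CompactSpace Y.carrier := Y.compactSpace
  have hcov : (Set.univ : Set Y.carrier) ⊆
      ⋃ u : Y.carrier, {v : Y.carrier | ∀ i ∈ I u, v.val i = u.val i} := by
    intro u _
    exact Set.mem_iUnion.mpr ⟨u, fun i _ => rfl⟩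
  obtain ⟨t, ht⟩ := IsCompact.elim_finite_subcover isCompact_univ
    (fun u : Y.carrier => {v : Y.carrier | ∀ i ∈ I u, v.val i = u.val i})
    (fun u => by
      show IsOpen {v : Y.carrier | ∀ i ∈ I u, v.val i = u.val i}
      have : {v : Y.carrier | ∀ i ∈ I u, v.val i = u.val i} =
          ⋂ i ∈ I u, (fun v : Y.carrier => v.val i) ⁻¹' {u.val i} := by
        ext v; simp [Set.mem_iInter]
      rw [this]
      exact isOpen_biInter_finset fun i _ =>
        (isOpen_discrete _).preimage ((continuous_apply i).comp continuous_subtype_val))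
    hcov
  refine ⟨t.sup fun u => (I u).sup Int.natAbs, ?_⟩
  intro u v huv
  obtain ⟨u₀, hu₀t, hu₀⟩ := Set.mem_iUnion₂.mp (ht (Set.mem_univ u))
  have hbound : ∀ i ∈ I u₀, -((t.sup fun u => (I u).sup Int.natAbs : ℕ) : ℤ) ≤ i ∧
      i ≤ (t.sup fun u => (I u).sup Int.natAbs : ℕ) := by
    intro i hi
    have h1 : i.natAbs ≤ (I u₀).sup Int.natAbs := Finset.le_sup hi
    have h2 : (I u₀).sup Int.natAbs ≤ t.sup fun u => (I u).sup Int.natAbs :=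
      Finset.le_sup (f := fun u => (I u).sup Int.natAbs) hu₀t
    have := le_trans h1 h2
    omega
  have h1 : g u = g u₀ := hI u₀ u hu₀
  have h2 : g v = g u₀ := by
    apply hI u₀ v
    intro i hi
    rw [← huv i (hbound i hi).1 (hbound i hi).2]
    exact hu₀ i hi
  rw [h1, h2]

/-- Sliding-block window lemma for continuous shift-commuting maps between subshifts. -/
lemma exists_window {A : Type*} [TopologicalSpace A] [DiscreteTopology A]
    (Y : Subshift B) (Z : Subshift A) (f : Y.carrier → Z.carrier)
    (hf : Continuous f) (hcomm : ∀ u, f (Y.σ u) = Z.σ (f u)) :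
    ∃ s : ℕ, ∀ (k : ℤ) (u v : Y.carrier),
      (∀ j : ℤ, -(s : ℤ) ≤ j → j ≤ s → u.val (k + j) = v.val (k + j)) →
      (f u).val k = (f v).val k := by
  obtain ⟨s, hs⟩ := exists_radius_zero Y (fun u => (f u).val 0)
    ((continuous_apply (0 : ℤ)).comp (continuous_subtype_val.comp hf))
  refine ⟨s, fun k u v hagree => ?_⟩
  have h1 : ∀ w : Y.carrier, (f w).val k = (f (Y.spt k w)).val 0 := by
    intro w
    rw [comm_spt f hcomm k w]
    show (f w).val k = (f w).val (0 + k)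
    rw [zero_add]
  rw [h1 u, h1 v]
  apply hs
  intro i hi1 hi2
  show u.val (i + k) = v.val (i + k)
  have := hagree i hi1 hi2
  rw [add_comm i k]
  exact this

/-- Cylinder sets are open. -/
lemma cyl_isOpen (Y : Subshift B) (w : Y.carrier) (a b : ℤ) :
    IsOpen {v : Y.carrier | ∀ i, a ≤ i → i ≤ b → v.val i = w.val i} := by
  have : {v : Y.carrier | ∀ i, a ≤ i → i ≤ b → v.val i = w.val i} =
      ⋂ i ∈ Finset.Icc a b, (fun v : Y.carrier => v.val i) ⁻¹' {w.val i} := by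
    ext v
    simp only [Set.mem_iInter, Finset.mem_Icc, Set.mem_preimage, Set.mem_singleton_iff,
      Set.mem_setOf_eq]
    constructor
    · intro h i hi; exact h i hi.1 hi.2
    · intro h i h1 h2; exact h i ⟨h1, h2⟩
  rw [this]
  exact isOpen_biInter_finset fun i _ =>
    (isOpen_discrete _).preimage ((continuous_apply i).comp continuous_subtype_val)

/-- From irreducibility: find a point showing a prescribed pattern of `w₁` on `[a₁,b₁]`
and a pattern of `w₂` placed at an offset `M ≥ R`. -/
lemma connect_patterns (Y : Subshift B) (hirr : Y.Irreducible)
    (w₁ w₂ : Y.carrier) (a₁ b₁ a₂ b₂ R : ℤ) :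
    ∃ (ζ : Y.carrier) (M : ℤ), R ≤ M ∧
      (∀ i, a₁ ≤ i → i ≤ b₁ → ζ.val i = w₁.val i) ∧
      (∀ j, a₂ ≤ j → j ≤ b₂ → ζ.val (M + j) = w₂.val j) := by
  set U : Set Y.carrier := {v | ∀ i, a₁ ≤ i → i ≤ b₁ → v.val i = w₁.val i} with hU
  set V : Set Y.carrier := {v | ∀ i, a₂ + R ≤ i → i ≤ b₂ + R → v.val i = (Y.spt (-R) w₂).val i}
    with hV
  obtain ⟨n, pt, ⟨ζ, hζU, hζpt⟩, hptV⟩ := hirr U V (cyl_isOpen Y w₁ a₁ b₁)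
    (cyl_isOpen Y (Y.spt (-R) w₂) (a₂ + R) (b₂ + R)) ⟨w₁, fun i _ _ => rfl⟩
    ⟨Y.spt (-R) w₂, fun i _ _ => rfl⟩
  refine ⟨ζ, R + n, by omega, hζU, ?_⟩
  intro j hj1 hj2
  have hζV : Y.σ^[n] ζ ∈ V := hζpt ▸ hptV
  rw [Y.iterate_sigma] at hζV
  have := hζV (j + R) (by omega) (by omega)
  simp only [Subshift.spt_val] at this
  calc ζ.val (R + n + j) = ζ.val (j + R + n) := by congr 1; ring
    _ = w₂.val (j + R + -R) := this
    _ = w₂.val j := by congr 1; ring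

/-- SFT splicing: a sequence all of whose windows match windows of points of `Y` is in `Y`. -/
lemma sft_splice (Y : Subshift B) {n₀ : ℕ} {Wset : Set (Fin n₀ → B)}
    (hchar : Y.carrier = {x | ∀ i : ℤ, (fun k : Fin n₀ => x (i + (k.val : ℤ))) ∈ Wset})
    (s : ℕ) (hs : (n₀ : ℤ) ≤ (s : ℤ) + 1) (x : ℤ → B)
    (h : ∀ c : ℤ, ∃ (w : Y.carrier) (τ : ℤ),
      ∀ j : ℤ, -(s : ℤ) ≤ j → j ≤ s → x (c + j) = w.val (τ + j)) :
    x ∈ Y.carrier := by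
  rw [hchar]
  intro i
  obtain ⟨w, τ, hw⟩ := h i
  have : (fun k : Fin n₀ => x (i + (k.val : ℤ))) = fun k : Fin n₀ => w.val (τ + (k.val : ℤ)) := by
    funext k
    exact hw k.val (by omega) (by have := k.isLt; omega)
  rw [this]
  exact (Set.ext_iff.mp hchar w.val).mp w.2 τ

end WindowLemmas

/-! ### Freeness of the relative automorphism group of an unramified factor -/

theorem relAut_fixpoint_eq_one {B A : Type*} [TopologicalSpace B] [DiscreteTopology B]
    [Finite B] [TopologicalSpace A] [DiscreteTopology A]
    (Y : Subshift B) (X : Subshift A) (hsft : Y.IsSFT) (hirr : Y.Irreducible)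
    (ϖ : Y.carrier → X.carrier) (d : ℕ) (hun : IsUnramified Y X ϖ d)
    (φ : Equiv.Perm Y.carrier) (hφ : φ ∈ relAut Y X ϖ)
    (y0 : Y.carrier) (hfix : φ y0 = y0) : φ = 1 := by
  classical
  obtain ⟨hφc, hφci, hφcomm, hφrel⟩ := hφ
  by_contra hne
  -- a point and coordinate where φ differs
  have hz : ∃ z : Y.carrier, ∃ c : ℤ, (φ z).val c ≠ z.val c := by
    by_contra hcon
    push_neg at hcon
    exact hne (Equiv.ext fun z => Subtype.ext (funext fun c => hcon z c))
  obtain ⟨z₀, c₀, hc₀⟩ := hz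
  -- radii
  obtain ⟨n₀, Wset, hchar⟩ := hsft
  obtain ⟨s₁, hs₁⟩ := exists_window Y X ϖ hun.1.continuous hun.1.commutes
  obtain ⟨s₂, hs₂⟩ := exists_window Y Y (⇑φ) hφc hφcomm
  set s : ℕ := s₁ + s₂ + n₀ + 1 with hsdef
  have hπw : ∀ (k : ℤ) (u v : Y.carrier),
      (∀ j : ℤ, -(s : ℤ) ≤ j → j ≤ s → u.val (k + j) = v.val (k + j)) →
      (ϖ u).val k = (ϖ v).val k :=
    fun k u v h => hs₁ k u v (fun j h1 h2 => h j (by omega) (by omega))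
  have hφw : ∀ (k : ℤ) (u v : Y.carrier),
      (∀ j : ℤ, -(s : ℤ) ≤ j → j ≤ s → u.val (k + j) = v.val (k + j)) →
      (φ u).val k = (φ v).val k :=
    fun k u v h => hs₂ k u v (fun j h1 h2 => h j (by omega) (by omega))
  -- transfer lemma
  have htrans : ∀ (z z' : Y.carrier) (c c' : ℤ),
      (∀ j : ℤ, -(s : ℤ) ≤ j → j ≤ s → z.val (c + j) = z'.val (c' + j)) →
      ((φ z).val c = (φ z').val c' ∧ z.val c = z'.val c') := by
    intro z z' c c' hagr
    have hcent : z.val c = z'.val c' := by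
      have := hagr 0 (by omega) (by omega)
      rwa [add_zero, add_zero] at this
    refine ⟨?_, hcent⟩
    have hagr2 : ∀ j : ℤ, -(s : ℤ) ≤ j → j ≤ s →
        z.val (c + j) = (Y.spt (c' - c) z').val (c + j) := by
      intro j h1 h2
      rw [Subshift.spt_val]
      rw [hagr j h1 h2]
      congr 1
      ring
    have h3 := hφw c z (Y.spt (c' - c) z') hagr2
    rw [comm_spt (⇑φ) hφcomm (c' - c) z'] at h3
    rw [Subshift.spt_val] at h3
    rw [h3]
    congr 1
    ring
  -- goodness
  set Good : Y.carrier → ℤ → Prop := fun z c => (φ z).val c = z.val c with hGooddef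
  have hGoodIff : ∀ (z z' : Y.carrier) (c c' : ℤ),
      (∀ j : ℤ, -(s : ℤ) ≤ j → j ≤ s → z.val (c + j) = z'.val (c' + j)) →
      (Good z c ↔ Good z' c') := by
    intro z z' c c' hagr
    obtain ⟨h1, h2⟩ := htrans z z' c c' hagr
    simp only [hGooddef]
    rw [h1, h2]
  have hGoodY : ∀ c : ℤ, Good y0 c := by
    intro c
    simp only [hGooddef, hfix]
  have hBadZ : ¬ Good z₀ c₀ := hc₀
  -- Step 2a: a point with a left y-flank and a bad position
  set L : ℤ := 2 * (s : ℤ) + 1 with hLdef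
  obtain ⟨ζ, M₁, hM₁R, hζy, hζz⟩ := connect_patterns Y hirr y0 z₀ (-L) L (c₀ - s) (c₀ + s)
    (L + s + 1 - c₀)
  set P₁ : ℤ := M₁ + c₀ with hP₁def
  have hP₁ : L + s + 1 ≤ P₁ := by omega
  have hbadζ : ¬ Good ζ P₁ := by
    intro hg
    apply hBadZ
    rw [← hGoodIff ζ z₀ P₁ c₀ ?_]
    · exact hg
    · intro j h1 h2
      have e : P₁ + j = M₁ + (c₀ + j) := by omega
      rw [e]
      exact hζz (c₀ + j) (by omega) (by omega)
  -- Step 2b: extend with a right y-flank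
  obtain ⟨ξ, M₂, hM₂R, hξζ, hξy⟩ := connect_patterns Y hirr ζ y0 (-L) (P₁ + s) (-L) L
    (P₁ + s + L + 1)
  -- Step 2c: glue y-tails on both sides
  set η : ℤ → B := fun i => if i ≤ 0 then y0.val i else if i ≤ M₂ then ξ.val i
    else y0.val (i - M₂) with hηdef
  have f1 : ∀ i : ℤ, i ≤ L → η i = y0.val i := by
    intro i hi
    by_cases h0 : i ≤ 0
    · simp only [hηdef, if_pos h0]
    · have h1 : i ≤ M₂ := by omega
      simp only [hηdef, if_neg h0, if_pos h1]
      rw [hξζ i (by omega) (by omega)]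
      exact hζy i (by omega) hi
  have f2 : ∀ i : ℤ, 0 ≤ i → i ≤ M₂ → η i = ξ.val i := by
    intro i h0 h1
    by_cases hz : i ≤ 0
    · have : i = 0 := le_antisymm hz h0
      subst this
      simp only [hηdef, if_pos le_rfl]
      rw [hξζ 0 (by omega) (by omega)]
      exact (hζy 0 (by omega) (by omega)).symm ▸ rfl
    · simp only [hηdef, if_neg hz, if_pos h1]
  have f3 : ∀ i : ℤ, M₂ - L ≤ i → η i = y0.val (i - M₂) := by
    intro i hi
    by_cases h1 : i ≤ M₂
    · have h0 : 0 ≤ i := by omega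
      rw [f2 i h0 h1]
      have h5 := hξy (i - M₂) (by omega) (by omega)
      rwa [show M₂ + (i - M₂) = i by omega] at h5
    · simp only [hηdef, if_neg (by omega : ¬ i ≤ 0), if_neg h1]
  have hηmem : η ∈ Y.carrier := by
    apply sft_splice Y hchar s (by omega)
    intro c
    by_cases hcl : c ≤ L - s
    · exact ⟨y0, c, fun j h1 h2 => f1 (c + j) (by omega)⟩
    · by_cases hcr : c ≤ M₂ - L + s
      · exact ⟨ξ, c, fun j h1 h2 => f2 (c + j) (by omega) (by omega)⟩
      · refine ⟨y0, c - M₂, fun j h1 h2 => ?_⟩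
        rw [f3 (c + j) (by omega)]
        congr 1; ring
  set ξ' : Y.carrier := ⟨η, hηmem⟩ with hξ'def
  have hξ'val : ∀ i, ξ'.val i = η i := fun i => rfl
  -- goodness structure of ξ'
  have g1 : ∀ c : ℤ, c ≤ L - s → Good ξ' c := by
    intro c hc
    rw [hGoodIff ξ' y0 c c (fun j h1 h2 => by rw [hξ'val, f1 (c + j) (by omega)])]
    exact hGoodY c
  have g2 : ∀ c : ℤ, M₂ - L + s ≤ c → Good ξ' c := by
    intro c hc
    rw [hGoodIff ξ' y0 c (c - M₂) (fun j h1 h2 => by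
      rw [hξ'val, f3 (c + j) (by omega)]
      congr 1; ring)]
    exact hGoodY _
  have g3 : ¬ Good ξ' P₁ := by
    intro hg
    apply hbadζ
    rw [← hGoodIff ξ' ζ P₁ P₁ ?_]
    · exact hg
    · intro j h1 h2
      rw [hξ'val, f2 (P₁ + j) (by omega) (by omega)]
      exact hξζ (P₁ + j) (by omega) (by omega)
  -- Step 3: extremal bad positions
  set S : Finset ℤ := (Finset.Icc (L - s + 1) (M₂ - L + s - 1)).filter
    (fun c => ¬ Good ξ' c) with hSdef
  have hSmem : ∀ c : ℤ, c ∈ S ↔ ((L - s + 1 ≤ c ∧ c ≤ M₂ - L + s - 1) ∧ ¬ Good ξ' c) := by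
    intro c
    simp [hSdef, Finset.mem_filter, Finset.mem_Icc]
  have hbadmem : ∀ c : ℤ, ¬ Good ξ' c → c ∈ S := by
    intro c hc
    rw [hSmem]
    refine ⟨⟨?_, ?_⟩, hc⟩
    · by_contra h
      exact hc (g1 c (by omega))
    · by_contra h
      exact hc (g2 c (by omega))
  have hSne : S.Nonempty := ⟨P₁, hbadmem P₁ g3⟩
  set pm : ℤ := S.min' hSne with hpmdef
  set pp : ℤ := S.max' hSne with hppdef
  have hpmle : pm ≤ pp := Finset.min'_le S pp (S.max'_mem hSne)
  have hGoodLeft : ∀ c : ℤ, c < pm → Good ξ' c := by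
    intro c hc
    by_contra h
    have := Finset.min'_le S c (hbadmem c h)
    omega
  have hGoodRight : ∀ c : ℤ, pp < c → Good ξ' c := by
    intro c hc
    by_contra h
    have := Finset.le_max' S c (hbadmem c h)
    omega
  have hBadp : ¬ Good ξ' pp := ((hSmem pp).mp (S.max'_mem hSne)).2
  -- π-transfer across positions
  have hπtrans : ∀ (z z' : Y.carrier) (c c' : ℤ),
      (∀ j : ℤ, -(s : ℤ) ≤ j → j ≤ s → z.val (c + j) = z'.val (c' + j)) →
      (ϖ z).val c = (ϖ z').val c' := by
    intro z z' c c' hagr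
    have hagr2 : ∀ j : ℤ, -(s : ℤ) ≤ j → j ≤ s →
        z.val (c + j) = (Y.spt (c' - c) z').val (c + j) := by
      intro j h1 h2
      rw [Subshift.spt_val, hagr j h1 h2]
      congr 1
      ring
    have h3 := hπw c z (Y.spt (c' - c) z') hagr2
    rw [comm_spt ϖ hun.1.commutes (c' - c) z', Subshift.spt_val] at h3
    rw [h3]
    congr 1
    ring
  -- Step 4: the two versions of the central word
  set v : Y.carrier := φ ξ' with hvdef
  have hagree : ∀ c : ℤ, (c < pm ∨ pp < c) → v.val c = ξ'.val c := by
    intro c hc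
    rcases hc with h | h
    · exact hGoodLeft c h
    · exact hGoodRight c h
  have himg : ϖ v = ϖ ξ' := hφrel ξ'
  have hdiffp : v.val pp ≠ ξ'.val pp := hBadp
  set K : ℤ := 3 * (s : ℤ) + 1 with hKdef
  set aa : ℤ := pm - K with haadef
  set bb : ℤ := pp + K with hbbdef
  -- Step 5: a point with many disjoint occurrences of the central word
  have occ : ∀ m : ℕ, ∃ (Q : Y.carrier) (t : ℕ → ℤ),
      (∀ r, r ≤ m → ∀ j : ℤ, aa ≤ j → j ≤ bb → Q.val (t r + j) = ξ'.val j) ∧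
      (∀ r, r ≤ m → 0 ≤ t r) ∧
      (∀ r r' : ℕ, r < r' → r' ≤ m → t r + (bb - aa) + 1 ≤ t r') := by
    intro m
    induction m with
    | zero =>
        refine ⟨ξ', fun _ => 0, fun r hr j h1 h2 => by rw [zero_add], fun r hr => le_rfl,
          fun r r' h h' => absurd (h.trans_le h') (by omega)⟩
    | succ m ih =>
        obtain ⟨Q, t, hpat, hpos, hgap⟩ := ih
        have hmono : ∀ r, r ≤ m → t r ≤ t m := by
          intro r hr
          rcases eq_or_lt_of_le hr with h | h
          · rw [h]
          · have := hgap r m h le_rfl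
            omega
        obtain ⟨ζ', M, hMR, hζ'Q, hζ'ξ⟩ := connect_patterns Y hirr Q ξ' aa (t m + bb) aa bb
          (t m + (bb - aa) + 1)
        refine ⟨ζ', fun r => if r ≤ m then t r else M, ?_, ?_, ?_⟩
        · intro r hr j h1 h2
          by_cases hrm : r ≤ m
          · simp only [if_pos hrm]
            rw [hζ'Q (t r + j) (by have := hpos r hrm; omega) (by have := hmono r hrm; omega)]
            exact hpat r hrm j h1 h2
          · simp only [if_neg hrm]
            exact hζ'ξ j h1 h2
        · intro r hr
          by_cases hrm : r ≤ m
          · simp only [if_pos hrm]; exact hpos r hrm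
          · simp only [if_neg hrm]
            have h0 : 0 ≤ t m := hpos m le_rfl
            omega
        · intro r r' hrr' hr'
          by_cases hr'm : r' ≤ m
          · have hrm : r ≤ m := by omega
            simp only [if_pos hrm, if_pos hr'm]
            exact hgap r r' hrr' hr'm
          · have hrm : r ≤ m := by omega
            simp only [if_pos hrm, if_neg hr'm]
            have := hmono r hrm
            omega
  obtain ⟨Q, t, hpat, hpos, hgap⟩ := occ d
  -- the uniqueness of the copy near a position
  have huniq : ∀ (i : ℤ) (r r' : ℕ), r ≤ d → r' ≤ d →
      pm - 2 * (s : ℤ) ≤ i - t r → i - t r ≤ pp + 2 * (s : ℤ) →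
      pm - 2 * (s : ℤ) ≤ i - t r' → i - t r' ≤ pp + 2 * (s : ℤ) → r = r' := by
    intro i r r' hr hr' h1 h2 h3 h4
    by_contra hner
    rcases Nat.lt_or_ge r r' with h | h
    · have := hgap r r' h hr'
      omega
    · have hlt : r' < r := by omega
      have := hgap r' r hlt hr
      omega
  -- Step 6: substituted points
  set Qs : ℕ → ℤ → B := fun j i =>
    if h : ∃ r, r ≤ d ∧ r < j ∧ pm ≤ i - t r ∧ i - t r ≤ pp then v.val (i - t h.choose)
    else Q.val i with hQsdef
  have hin : ∀ (j : ℕ) (i : ℤ) (r : ℕ), r ≤ d → r < j → pm ≤ i - t r → i - t r ≤ pp →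
      Qs j i = v.val (i - t r) := by
    intro j i r hrd hrj h1 h2
    have hex : ∃ r, r ≤ d ∧ r < j ∧ pm ≤ i - t r ∧ i - t r ≤ pp := ⟨r, hrd, hrj, h1, h2⟩
    simp only [hQsdef, dif_pos hex]
    obtain ⟨hc1, _, hc3, hc4⟩ := hex.choose_spec
    rw [huniq i hex.choose r hc1 hrd (by omega) (by omega) (by omega) (by omega)]
  have hout : ∀ (j : ℕ) (i : ℤ),
      (∀ r, r ≤ d → r < j → (i - t r < pm ∨ pp < i - t r)) → Qs j i = Q.val i := by
    intro j i h
    have hnex : ¬ ∃ r, r ≤ d ∧ r < j ∧ pm ≤ i - t r ∧ i - t r ≤ pp := by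
      rintro ⟨r, hr1, hr2, hr3, hr4⟩
      have := h r hr1 hr2
      omega
    simp only [hQsdef, dif_neg hnex]
  -- the window block
  have hblock : ∀ (j : ℕ) (c : ℤ) (r : ℕ), r ≤ d → r < j →
      pm - (s : ℤ) ≤ c - t r → c - t r ≤ pp + (s : ℤ) →
      ∀ jj : ℤ, -(s : ℤ) ≤ jj → jj ≤ s → Qs j (c + jj) = v.val ((c - t r) + jj) := by
    intro j c r hrd hrj hc1 hc2 jj h1 h2
    by_cases hmid : pm ≤ (c + jj) - t r ∧ (c + jj) - t r ≤ pp
    · rw [hin j (c + jj) r hrd hrj hmid.1 hmid.2]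
      congr 1
      ring
    · have hd : (c + jj) - t r < pm ∨ pp < (c + jj) - t r := by
        by_cases hL : pm ≤ (c + jj) - t r
        · right
          by_contra hcc
          exact hmid ⟨hL, by omega⟩
        · left; omega
      have hQ : Qs j (c + jj) = Q.val (c + jj) := by
        apply hout
        intro r' hr'd hr'j
        by_contra hcon
        push_neg at hcon
        have heq := huniq (c + jj) r r' hrd hr'd (by omega) (by omega) (by omega) (by omega)
        subst heq
        omega
      rw [hQ]
      have hQp := hpat r hrd ((c + jj) - t r) (by omega) (by omega)
      rw [show t r + ((c + jj) - t r) = c + jj by ring] at hQp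
      rw [hQp]
      have hvv := hagree ((c + jj) - t r) hd
      rw [show (c - t r) + jj = (c + jj) - t r by ring]
      exact hvv.symm
  -- membership of the substituted points
  have hQsmem : ∀ j : ℕ, Qs j ∈ Y.carrier := by
    intro j
    apply sft_splice Y hchar s (by omega)
    intro c
    by_cases hc : ∃ r, r ≤ d ∧ r < j ∧ pm - (s : ℤ) ≤ c - t r ∧ c - t r ≤ pp + (s : ℤ)
    · obtain ⟨r, hrd, hrj, h1, h2⟩ := hc
      exact ⟨v, c - t r, fun jj hj1 hj2 => hblock j c r hrd hrj h1 h2 jj hj1 hj2⟩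
    · refine ⟨Q, c, fun jj hj1 hj2 => ?_⟩
      apply hout
      intro r hr1 hr2
      by_contra hcon
      push_neg at hcon
      exact hc ⟨r, hr1, hr2, by omega, by omega⟩
  set Qpt : ℕ → Y.carrier := fun j => ⟨Qs j, hQsmem j⟩ with hQptdef
  -- substituted points have the same image
  have hQsimg : ∀ j : ℕ, ϖ (Qpt j) = ϖ Q := by
    intro j
    apply Subtype.ext
    funext c
    by_cases hc : ∃ r, r ≤ d ∧ r < j ∧ pm - (s : ℤ) ≤ c - t r ∧ c - t r ≤ pp + (s : ℤ)
    · obtain ⟨r, hrd, hrj, h1, h2⟩ := hc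
      have e1 : (ϖ (Qpt j)).val c = (ϖ v).val (c - t r) :=
        hπtrans (Qpt j) v c (c - t r) (fun jj hj1 hj2 => hblock j c r hrd hrj h1 h2 jj hj1 hj2)
      have e2 : (ϖ Q).val c = (ϖ ξ').val (c - t r) := by
        apply hπtrans
        intro jj hj1 hj2
        have hQp := hpat r hrd ((c - t r) + jj) (by omega) (by omega)
        rw [show t r + ((c - t r) + jj) = c + jj by ring] at hQp
        exact hQp
      rw [e1, e2, himg]
    · have e1 : (ϖ (Qpt j)).val c = (ϖ Q).val c := by
        apply hπtrans
        intro jj hj1 hj2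
        apply hout
        intro r hr1 hr2
        by_contra hcon
        push_neg at hcon
        exact hc ⟨r, hr1, hr2, by omega, by omega⟩
      exact e1
  -- distinctness
  have hdist : ∀ j j' : ℕ, j < j' → j' ≤ d + 1 → Qpt j ≠ Qpt j' := by
    intro j j' hjj' hj' heq
    have hrd : j ≤ d := by omega
    have hval : Qs j (t j + pp) = Qs j' (t j + pp) := by
      have := congrArg Subtype.val heq
      exact congrFun this (t j + pp)
    have e1 : Qs j' (t j + pp) = v.val pp := by
      have := hin j' (t j + pp) j hrd hjj' (by omega) (by omega)
      rw [this]
      congr 1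
      ring
    have e2 : Qs j (t j + pp) = ξ'.val pp := by
      have hQ : Qs j (t j + pp) = Q.val (t j + pp) := by
        apply hout
        intro r hr1 hr2
        by_contra hcon
        push_neg at hcon
        have hrj : r ≠ j := by omega
        have heq2 := huniq (t j + pp) j r hrd hr1 (by omega) (by omega) (by omega) (by omega)
        exact hrj heq2.symm
      rw [hQ]
      exact hpat j hrd pp (by omega) (by omega)
    rw [e1, e2] at hval
    exact hdiffp (hval ▸ rfl)
  -- the contradiction with the degree
  have hfib := hun.2 (ϖ Q)
  have hmem : ∀ j : ℕ, j ≤ d + 1 → Qpt j ∈ ϖ ⁻¹' {ϖ Q} := by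
    intro j hj
    simp only [Set.mem_preimage, Set.mem_singleton_iff]
    exact hQsimg j
  have hcard : (Finset.range (d + 2)).card ≤ hfib.1.toFinset.card := by
    apply Finset.card_le_card_of_injOn Qpt
    · intro j hj
      rw [Finset.mem_coe, Set.Finite.mem_toFinset]
      exact hmem j (by have := Finset.mem_range.mp hj; omega)
    · intro j hj j' hj' heq
      by_contra hne'
      rcases Nat.lt_or_ge j j' with h | h
      · exact hdist j j' h (by have := Finset.mem_range.mp hj'; omega) heq
      · have : j' < j := by omega
        exact hdist j' j this (by have := Finset.mem_range.mp hj; omega) heq.symm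
  rw [Finset.card_range] at hcard
  rw [← Set.ncard_eq_toFinset_card _ hfib.1] at hcard
  rw [hfib.2] at hcard
  omega


/-! ### Inverse limit lemmas -/

section LimitLemmas

variable {ι : Type*} [Preorder ι] [IsDirected ι (· ≤ ·)] [Nonempty ι]
  (G : ι → Type*) [∀ i, Group (G i)] [∀ i, Finite (G i)]
  [∀ i, TopologicalSpace (G i)] [∀ i, DiscreteTopology (G i)]
  (p : ∀ i j, i ≤ j → (G j →* G i))

lemma limit_proj_surjective
    (hp_surj : ∀ (i j : ι) (h : i ≤ j), Function.Surjective (p i j h))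
    (hp_comp : ∀ (i j k : ι) (hij : i ≤ j) (hjk : j ≤ k) (g : G k),
      p i j hij (p j k hjk g) = p i k (hij.trans hjk) g)
    (i : ι) :
    Function.Surjective fun g : ↥(limitSubgroup G p) => (g : ∀ j, G j) i := by
  classical
  intro g₀
  set C : ι × ι → Set (∀ j, G j) := fun jk =>
    {x | ∀ h : jk.1 ≤ jk.2, p jk.1 jk.2 h (x jk.2) = x jk.1} with hC
  have hCclosed : ∀ jk, IsClosed (C jk) := by
    intro jk
    by_cases h : jk.1 ≤ jk.2
    · have he : C jk = {x | p jk.1 jk.2 h (x jk.2) = x jk.1} := by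
        ext x
        simp only [hC, Set.mem_setOf_eq]
        exact ⟨fun hh => hh h, fun hh _ => hh⟩
      rw [he]
      exact isClosed_eq (continuous_of_discreteTopology.comp (continuous_apply jk.2))
        (continuous_apply jk.1)
    · have he : C jk = Set.univ := by
        ext x
        simp only [hC, Set.mem_setOf_eq, Set.mem_univ, iff_true]
        intro hh
        exact absurd hh h
      rw [he]
      exact isClosed_univ
  have hK : IsClosed {x : ∀ j, G j | x i = g₀} :=
    isClosed_eq (continuous_apply i) continuous_const
  have hfin : ∀ u : Finset (ι × ι),
      ({x : ∀ j, G j | x i = g₀} ∩ ⋂ jk ∈ u, C jk).Nonempty := by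
    intro u
    obtain ⟨M, hM⟩ := Finset.exists_le
      (insert i ((u.image Prod.fst) ∪ (u.image Prod.snd)))
    have hiM : i ≤ M := hM i (Finset.mem_insert_self i _)
    obtain ⟨gM, hgM⟩ := hp_surj i M hiM g₀
    refine ⟨fun j => if h : j ≤ M then p j M h gM else 1, ?_, ?_⟩
    · simp only [Set.mem_setOf_eq, dif_pos hiM]
      exact hgM
    · rw [Set.mem_iInter₂]
      intro jk hjk
      intro hle
      have hj : jk.1 ≤ M := hM jk.1 (Finset.mem_insert_of_mem
        (Finset.mem_union_left _ (Finset.mem_image_of_mem Prod.fst hjk)))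
      have hk : jk.2 ≤ M := hM jk.2 (Finset.mem_insert_of_mem
        (Finset.mem_union_right _ (Finset.mem_image_of_mem Prod.snd hjk)))
      simp only [dif_pos hj, dif_pos hk]
      exact hp_comp jk.1 jk.2 M hle hk gM
  obtain ⟨x, hx1, hx2⟩ := hK.isCompact.inter_iInter_nonempty C hCclosed hfin
  rw [Set.mem_iInter] at hx2
  have hxmem : x ∈ limitSubgroup G p := by
    intro i' j' h'
    exact hx2 (i', j') h'
  exact ⟨⟨x, hxmem⟩, hx1⟩

lemma limit_open_stage
    (hp_comp : ∀ (i j k : ι) (hij : i ≤ j) (hjk : j ≤ k) (g : G k),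
      p i j hij (p j k hjk g) = p i k (hij.trans hjk) g)
    (N : Subgroup ↥(limitSubgroup G p))
    (hNopen : IsOpen ((N : Set ↥(limitSubgroup G p)))) :
    ∃ i₀ : ι, ∀ g : ↥(limitSubgroup G p), (g : ∀ j, G j) i₀ = 1 → g ∈ N := by
  rw [isOpen_induced_iff] at hNopen
  obtain ⟨U, hU, hUeq⟩ := hNopen
  have h1U : ((1 : ↥(limitSubgroup G p)) : ∀ j, G j) ∈ U := by
    have : (1 : ↥(limitSubgroup G p)) ∈ Subtype.val ⁻¹' U := by
      rw [hUeq]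
      exact N.one_mem
    exact this
  rw [isOpen_pi_iff] at hU
  obtain ⟨I, w, hw, hsub⟩ := hU _ h1U
  obtain ⟨i₀, hi₀⟩ := Finset.exists_le I
  refine ⟨i₀, fun g hg => ?_⟩
  have hgU : (g : ∀ j, G j) ∈ U := by
    apply hsub
    intro j hj
    have hj' : (g : ∀ j, G j) j = 1 := by
      have := g.2 j i₀ (hi₀ j hj)
      rw [← this, hg, map_one]
    rw [hj']
    have h1j : ((1 : ↥(limitSubgroup G p)) : ∀ j, G j) j = 1 := rfl
    have := (hw j hj).2
    rwa [h1j] at this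
  have : g ∈ Subtype.val ⁻¹' U := hgU
  rw [hUeq] at this
  exact this

end LimitLemmas
/-- Open normal subgroups of the absolute Galois group `G_{X,x₀}` (presented as the
inverse limit of the Galois groups `G i` of a complete system of pointed Galois factors
`(Y i, y₀ i, ϖY i)` over `(X, x₀)`, with surjective transition maps) correspond to
pointed Galois factors: for every open normal `N ≤ G_{X,x₀}`, `N` is the preimage of a
normal subgroup at some finite stage, there exists a pointed Galois factor `(Z, z₀, ϖZ)`
over `(X, x₀)` whose Galois group receives a natural surjection from `G_{X,x₀}` with
kernel exactly `N`, and such a factor is unique up to pointed conjugacy over `X`. -/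
theorem stmt_15
    {A : Type*} [TopologicalSpace A] [DiscreteTopology A] [Finite A]
    (X : Subshift A) (hXsft : X.IsSFT) (hXirr : X.Irreducible) (x₀ : X.carrier)
    -- the projective system of finite Galois groups
    {ι : Type*} [Preorder ι] [IsDirected ι (· ≤ ·)] [Nonempty ι]
    (G : ι → Type*) [∀ i, Group (G i)] [∀ i, Finite (G i)]
    [∀ i, TopologicalSpace (G i)] [∀ i, DiscreteTopology (G i)]
    (p : ∀ i j, i ≤ j → (G j →* G i))
    (hp_surj : ∀ (i j : ι) (h : i ≤ j), Function.Surjective (p i j h))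
    (hp_id : ∀ (i : ι) (h : i ≤ i), p i i h = MonoidHom.id (G i))
    (hp_comp : ∀ (i j k : ι) (hij : i ≤ j) (hjk : j ≤ k) (g : G k),
      p i j hij (p j k hjk g) = p i k (hij.trans hjk) g)
    -- realization of the system by pointed Galois factors over (X, x₀)
    (Bf : ι → Type*) [∀ i, TopologicalSpace (Bf i)] [∀ i, DiscreteTopology (Bf i)]
    [∀ i, Finite (Bf i)]
    (Y : ∀ i, Subshift (Bf i)) (y₀ : ∀ i, (Y i).carrier)
    (ϖY : ∀ i, (Y i).carrier → X.carrier)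
    (hY : ∀ i, ∃ d, IsPointedGaloisFactor (Y i) (y₀ i) X x₀ (ϖY i) d)
    (e : ∀ i, G i ≃* relAut (Y i) X (ϖY i))
    (α : ∀ i j, i ≤ j → (Y j).carrier → (Y i).carrier)
    (hα : ∀ (i j : ι) (h : i ≤ j),
      IsFactorMap (Y j) (Y i) (α i j h) ∧ α i j h (y₀ j) = y₀ i ∧
      (∀ y, ϖY i (α i j h y) = ϖY j y) ∧
      ∀ (g : G j) (y : (Y j).carrier),
        α i j h ((e j g).val y) = (e i (p i j h g)).val (α i j h y))
    -- the fundamental theorem of Galois theory for SFTs, as established previously: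
    -- each normal subgroup `N'` of a finite stage `G i` corresponds to a pointed Galois
    -- factor `(Z i N', z i N', ϖZ i N')` with group `G i / N'`
    (BZ : ∀ i, Subgroup (G i) → Type*)
    [∀ i N', TopologicalSpace (BZ i N')] [∀ i N', DiscreteTopology (BZ i N')]
    [∀ i N', Finite (BZ i N')]
    (Z : ∀ i N', Subshift (BZ i N')) (z : ∀ i N', (Z i N').carrier)
    (ϖZ : ∀ i N', (Z i N').carrier → X.carrier)
    (hZ : ∀ (i : ι) (N' : Subgroup (G i)), N'.Normal →
      (∃ d, IsPointedGaloisFactor (Z i N') (z i N') X x₀ (ϖZ i N') d) ∧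
      ∃ (αZ : (Y i).carrier → (Z i N').carrier)
        (r : G i →* relAut (Z i N') X (ϖZ i N')),
        IsFactorMap (Y i) (Z i N') αZ ∧ αZ (y₀ i) = z i N' ∧
        (∀ y, ϖZ i N' (αZ y) = ϖY i y) ∧ Function.Surjective r ∧ r.ker = N' ∧
        ∀ (g : G i) (y : (Y i).carrier), (r g).val (αZ y) = αZ ((e i g).val y))
    -- an arbitrary pair of pointed Galois factors over (X, x₀), for the uniqueness claim
    {C₁ C₂ : Type*} [TopologicalSpace C₁] [DiscreteTopology C₁] [Finite C₁]
    [TopologicalSpace C₂] [DiscreteTopology C₂] [Finite C₂]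
    (W₁ : Subshift C₁) (w₁ : W₁.carrier) (ϖ₁ : W₁.carrier → X.carrier)
    (W₂ : Subshift C₂) (w₂ : W₂.carrier) (ϖ₂ : W₂.carrier → X.carrier) :
    ∀ N : Subgroup ↥(limitSubgroup G p), N.Normal →
      IsOpen (N : Set ↥(limitSubgroup G p)) →
      -- existence: `N` comes from a finite stage, and the corresponding pointed Galois
      -- factor has Galois group `G_{X,x₀}/N`, via a natural surjection with kernel `N`
      (∃ (i : ι) (N' : Subgroup (G i)) (_ : N'.Normal),
        N = Subgroup.comap ((Pi.evalMonoidHom G i).comp (limitSubgroup G p).subtype) N' ∧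
        ∃ q : ↥(limitSubgroup G p) →* relAut (Z i N') X (ϖZ i N'),
          Function.Surjective q ∧ q.ker = N ∧
          ∃ αZ : (Y i).carrier → (Z i N').carrier,
            IsFactorMap (Y i) (Z i N') αZ ∧ αZ (y₀ i) = z i N' ∧
            (∀ y', ϖZ i N' (αZ y') = ϖY i y') ∧
            ∀ (g : ↥(limitSubgroup G p)) (y : (Y i).carrier),
              (q g).val (αZ y) = αZ ((e i (g.val i)).val y)) ∧
      -- uniqueness: any two pointed Galois factors over `(X, x₀)` receiving natural
      -- surjections from `G_{X,x₀}` with kernel `N` are pointedly conjugate over `X`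
      ((∃ d, IsPointedGaloisFactor W₁ w₁ X x₀ ϖ₁ d) →
        (∃ d, IsPointedGaloisFactor W₂ w₂ X x₀ ϖ₂ d) →
        ∀ (q₁ : ↥(limitSubgroup G p) →* relAut W₁ X ϖ₁)
          (q₂ : ↥(limitSubgroup G p) →* relAut W₂ X ϖ₂),
          Function.Surjective q₁ → Function.Surjective q₂ →
          q₁.ker = N → q₂.ker = N →
          (∃ (k : ι) (αk : (Y k).carrier → W₁.carrier),
            IsFactorMap (Y k) W₁ αk ∧ αk (y₀ k) = w₁ ∧
            (∀ y, ϖ₁ (αk y) = ϖY k y) ∧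
            ∀ (g : ↥(limitSubgroup G p)) (y : (Y k).carrier),
              (q₁ g).val (αk y) = αk ((e k (g.val k)).val y)) →
          (∃ (k : ι) (αk : (Y k).carrier → W₂.carrier),
            IsFactorMap (Y k) W₂ αk ∧ αk (y₀ k) = w₂ ∧
            (∀ y, ϖ₂ (αk y) = ϖY k y) ∧
            ∀ (g : ↥(limitSubgroup G p)) (y : (Y k).carrier),
              (q₂ g).val (αk y) = αk ((e k (g.val k)).val y)) →
          ∃ f : W₁.carrier ≃ W₂.carrier, Continuous f ∧ Continuous f.symm ∧
            (∀ w, f (W₁.σ w) = W₂.σ (f w)) ∧ f w₁ = w₂ ∧ ∀ w, ϖ₂ (f w) = ϖ₁ w) := by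
  intro N hNnorm hNopen
  classical
  obtain ⟨i₀, hi₀⟩ := limit_open_stage G p hp_comp N hNopen
  have hπsurj : ∀ i : ι, Function.Surjective fun g : ↥(limitSubgroup G p) => (g : ∀ j, G j) i :=
    fun i => limit_proj_surjective G p hp_surj hp_comp i
  constructor
  · -- existence
    set π : ↥(limitSubgroup G p) →* G i₀ :=
      (Pi.evalMonoidHom G i₀).comp (limitSubgroup G p).subtype with hπdef
    have hπs : Function.Surjective π := hπsurj i₀
    have hkerπ : ∀ g, π g = 1 → g ∈ N := fun g hg => hi₀ g hg
    set N' : Subgroup (G i₀) := Subgroup.map π N with hN'def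
    have hN'norm : N'.Normal := Subgroup.Normal.map hNnorm π hπs
    have hNeq : N = Subgroup.comap π N' := by
      ext g
      constructor
      · intro hgN
        exact Subgroup.mem_comap.mpr (Subgroup.mem_map_of_mem π hgN)
      · intro hg
        obtain ⟨n₁, hn₁N, hn₁⟩ := Subgroup.mem_map.mp (Subgroup.mem_comap.mp hg)
        have hmem : g * n₁⁻¹ ∈ N := by
          apply hkerπ
          rw [map_mul, map_inv, hn₁, mul_inv_cancel]
        have hgg : g = (g * n₁⁻¹) * n₁ := by group
        rw [hgg]
        exact N.mul_mem hmem hn₁N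
    obtain ⟨⟨dZ, hPGF⟩, αZ, r, hfacZ, hptZ, hoverZ, hrsurj, hrker, hrequiv⟩ := hZ i₀ N' hN'norm
    refine ⟨i₀, N', hN'norm, hNeq, r.comp π, hrsurj.comp hπs, ?_, αZ, hfacZ, hptZ, hoverZ, ?_⟩
    · ext g
      rw [MonoidHom.mem_ker]
      constructor
      · intro hg
        rw [hNeq]
        apply Subgroup.mem_comap.mpr
        rw [← hrker]
        exact MonoidHom.mem_ker.mpr hg
      · intro hg
        rw [hNeq] at hg
        have h2 := Subgroup.mem_comap.mp hg
        rw [← hrker] at h2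
        exact MonoidHom.mem_ker.mp h2
    · intro g y
      exact hrequiv ((g : ∀ j, G j) i₀) y
  · -- uniqueness
    rintro ⟨d₁, hsft₁, hirr₁, hptW₁, hun₁, hcard₁⟩ ⟨d₂, hsft₂, hirr₂, hptW₂, hun₂, hcard₂⟩
      q₁ q₂ hq₁s hq₂s hq₁k hq₂k
      ⟨k₁, αk₁, hfacα₁, hptα₁, hoverα₁, hequivα₁⟩ ⟨k₂, αk₂, hfacα₂, hptα₂, hoverα₂, hequivα₂⟩
    obtain ⟨m₁, hm₁a, hm₁b⟩ := directed_of (· ≤ ·) k₁ k₂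
    obtain ⟨m, hmm₁, hmi₀⟩ := directed_of (· ≤ ·) m₁ i₀
    have hk₁m : k₁ ≤ m := le_trans hm₁a hmm₁
    have hk₂m : k₂ ≤ m := le_trans hm₁b hmm₁
    obtain ⟨D, hsftm, hirrm, hptm, hunm, hcardm⟩ := hY m
    obtain ⟨hαm₁fac, hαm₁pt, hαm₁over, hαm₁eq⟩ := hα k₁ m hk₁m
    obtain ⟨hαm₂fac, hαm₂pt, hαm₂over, hαm₂eq⟩ := hα k₂ m hk₂m
    set β₁ : (Y m).carrier → W₁.carrier := fun y => αk₁ (α k₁ m hk₁m y) with hβ₁def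
    set β₂ : (Y m).carrier → W₂.carrier := fun y => αk₂ (α k₂ m hk₂m y) with hβ₂def
    have hβ₁cont : Continuous β₁ := hfacα₁.continuous.comp hαm₁fac.continuous
    have hβ₂cont : Continuous β₂ := hfacα₂.continuous.comp hαm₂fac.continuous
    have hβ₁surj : Function.Surjective β₁ := by
      intro w
      obtain ⟨y', hy'⟩ := hfacα₁.surjective w
      obtain ⟨y, hy⟩ := hαm₁fac.surjective y'
      exact ⟨y, by rw [hβ₁def]; simp only []; rw [hy, hy']⟩
    have hβ₂surj : Function.Surjective β₂ := by
      intro w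
      obtain ⟨y', hy'⟩ := hfacα₂.surjective w
      obtain ⟨y, hy⟩ := hαm₂fac.surjective y'
      exact ⟨y, by rw [hβ₂def]; simp only []; rw [hy, hy']⟩
    have hβ₁comm : ∀ y, β₁ ((Y m).σ y) = W₁.σ (β₁ y) := by
      intro y
      show αk₁ (α k₁ m hk₁m ((Y m).σ y)) = W₁.σ (αk₁ (α k₁ m hk₁m y))
      rw [hαm₁fac.commutes y, hfacα₁.commutes]
    have hβ₂comm : ∀ y, β₂ ((Y m).σ y) = W₂.σ (β₂ y) := by
      intro y
      show αk₂ (α k₂ m hk₂m ((Y m).σ y)) = W₂.σ (αk₂ (α k₂ m hk₂m y))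
      rw [hαm₂fac.commutes y, hfacα₂.commutes]
    have hβ₁over : ∀ y, ϖ₁ (β₁ y) = ϖY m y := fun y => (hoverα₁ _).trans (hαm₁over y)
    have hβ₂over : ∀ y, ϖ₂ (β₂ y) = ϖY m y := fun y => (hoverα₂ _).trans (hαm₂over y)
    have hβ₁pt : β₁ (y₀ m) = w₁ := by
      show αk₁ (α k₁ m hk₁m (y₀ m)) = w₁
      rw [hαm₁pt, hptα₁]
    have hβ₂pt : β₂ (y₀ m) = w₂ := by
      show αk₂ (α k₂ m hk₂m (y₀ m)) = w₂
      rw [hαm₂pt, hptα₂]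
    have hβ₁equi : ∀ (g : ↥(limitSubgroup G p)) (y : (Y m).carrier),
        (q₁ g).val (β₁ y) = β₁ ((e m ((g : ∀ j, G j) m)).val y) := by
      intro g y
      have h1 := hαm₁eq ((g : ∀ j, G j) m) y
      have h2 : p k₁ m hk₁m ((g : ∀ j, G j) m) = (g : ∀ j, G j) k₁ := g.2 k₁ m hk₁m
      calc (q₁ g).val (β₁ y) = αk₁ ((e k₁ ((g : ∀ j, G j) k₁)).val (α k₁ m hk₁m y)) :=
            hequivα₁ g (α k₁ m hk₁m y)
        _ = β₁ ((e m ((g : ∀ j, G j) m)).val y) := by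
            show _ = αk₁ (α k₁ m hk₁m ((e m ((g : ∀ j, G j) m)).val y))
            rw [h1, h2]
    have hβ₂equi : ∀ (g : ↥(limitSubgroup G p)) (y : (Y m).carrier),
        (q₂ g).val (β₂ y) = β₂ ((e m ((g : ∀ j, G j) m)).val y) := by
      intro g y
      have h1 := hαm₂eq ((g : ∀ j, G j) m) y
      have h2 : p k₂ m hk₂m ((g : ∀ j, G j) m) = (g : ∀ j, G j) k₂ := g.2 k₂ m hk₂m
      calc (q₂ g).val (β₂ y) = αk₂ ((e k₂ ((g : ∀ j, G j) k₂)).val (α k₂ m hk₂m y)) :=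
            hequivα₂ g (α k₂ m hk₂m y)
        _ = β₂ ((e m ((g : ∀ j, G j) m)).val y) := by
            show _ = αk₂ (α k₂ m hk₂m ((e m ((g : ∀ j, G j) m)).val y))
            rw [h1, h2]
    -- freeness
    have hfreeYm : ∀ (ψ : Equiv.Perm (Y m).carrier), ψ ∈ relAut (Y m) X (ϖY m) →
        (∃ y, ψ y = y) → ψ = 1 := by
      rintro ψ hψ ⟨y, hy⟩
      exact relAut_fixpoint_eq_one (Y m) X hsftm hirrm (ϖY m) D hunm ψ hψ y hy
    have hfreeW₁ : ∀ (ψ : Equiv.Perm W₁.carrier), ψ ∈ relAut W₁ X ϖ₁ →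
        (∃ w, ψ w = w) → ψ = 1 := by
      rintro ψ hψ ⟨w, hw⟩
      exact relAut_fixpoint_eq_one W₁ X hsft₁ hirr₁ ϖ₁ d₁ hun₁ ψ hψ w hw
    have hfreeW₂ : ∀ (ψ : Equiv.Perm W₂.carrier), ψ ∈ relAut W₂ X ϖ₂ →
        (∃ w, ψ w = w) → ψ = 1 := by
      rintro ψ hψ ⟨w, hw⟩
      exact relAut_fixpoint_eq_one W₂ X hsft₂ hirr₂ ϖ₂ d₂ hun₂ ψ hψ w hw
    -- transitivity on fibers of ϖY m
    have hcardGm : Nat.card (G m) = D := by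
      rw [← hcardm]
      exact Nat.card_congr (e m).toEquiv
    have htransfib : ∀ y y' : (Y m).carrier, ϖY m y = ϖY m y' →
        ∃ h : G m, ((e m h : ↥(relAut (Y m) X (ϖY m))) : Equiv.Perm (Y m).carrier) y = y' := by
      intro y y' hyy'
      have hFfin := (hunm.2 (ϖY m y)).1
      have hFcard := (hunm.2 (ϖY m y)).2
      set fmap : G m → (Y m).carrier :=
        fun h => ((e m h : ↥(relAut (Y m) X (ϖY m))) : Equiv.Perm (Y m).carrier) y with hfmapdef
      have hrange : Set.range fmap ⊆ ϖY m ⁻¹' {ϖY m y} := by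
        rintro _ ⟨h, rfl⟩
        simp only [Set.mem_preimage, Set.mem_singleton_iff]
        exact (e m h).2.2.2.2 y
      have hinj : Function.Injective fmap := by
        intro h h' hmhh
        have hfix : ((e m (h'⁻¹ * h) : ↥(relAut (Y m) X (ϖY m))) : Equiv.Perm (Y m).carrier) y
            = y := by
          have hmhh' : ((e m h : ↥(relAut (Y m) X (ϖY m))) : Equiv.Perm (Y m).carrier) y =
              ((e m h' : ↥(relAut (Y m) X (ϖY m))) : Equiv.Perm (Y m).carrier) y := hmhh
          rw [map_mul, map_inv]
          simp only [Subgroup.coe_mul, Subgroup.coe_inv, Equiv.Perm.mul_apply]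
          rw [hmhh']
          exact Equiv.symm_apply_apply _ _
        have h1 : ((e m (h'⁻¹ * h) : ↥(relAut (Y m) X (ϖY m))) : Equiv.Perm (Y m).carrier) = 1 :=
          hfreeYm _ (e m (h'⁻¹ * h)).2 ⟨y, hfix⟩
        have h2 : e m (h'⁻¹ * h) = 1 := Subtype.ext h1
        have h3 : h'⁻¹ * h = 1 := by
          apply (e m).injective
          rw [h2, map_one]
        exact (inv_mul_eq_one.mp h3).symm ▸ rfl
      have hrc : (Set.range fmap).ncard = D := by
        rw [← Set.image_univ, Set.ncard_image_of_injective _ hinj, Set.ncard_univ, hcardGm]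
      have hFr : Set.range fmap = ϖY m ⁻¹' {ϖY m y} :=
        Set.eq_of_subset_of_ncard_le hrange (by rw [hrc, hFcard]) hFfin
      have hy' : y' ∈ ϖY m ⁻¹' {ϖY m y} := by
        simp only [Set.mem_preimage, Set.mem_singleton_iff]
        exact hyy'.symm
      rw [← hFr] at hy'
      exact hy'
    -- kernel of the projection at stage m is contained in N
    have hkerm : ∀ g : ↥(limitSubgroup G p), (g : ∀ j, G j) m = 1 → g ∈ N := by
      intro g hg
      apply hi₀
      have := g.2 i₀ m hmi₀
      rw [← this, hg, map_one]
    -- Claim A in both directions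
    have claimA : ∀ y y' : (Y m).carrier, β₁ y = β₁ y' → β₂ y = β₂ y' := by
      intro y y' hββ
      have hfib : ϖY m y = ϖY m y' := by
        rw [← hβ₁over y, ← hβ₁over y', hββ]
      obtain ⟨h, hh⟩ := htransfib y y' hfib
      obtain ⟨g, hg0⟩ := hπsurj m h
      have hg : (g : ∀ j, G j) m = h := hg0
      have h1 : (q₁ g).val (β₁ y) = β₁ y := by
        rw [hβ₁equi g y]
        show β₁ ((e m ((g : ∀ j, G j) m)).val y) = β₁ y
        rw [hg, hh, ← hββ]
      have hq₁g : q₁ g = 1 :=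
        Subtype.ext (hfreeW₁ ((q₁ g) : Equiv.Perm W₁.carrier) (q₁ g).2 ⟨β₁ y, h1⟩)
      have hgN : g ∈ N := by
        rw [← hq₁k]
        exact MonoidHom.mem_ker.mpr hq₁g
      have hq₂g : q₂ g = 1 := by
        rw [← MonoidHom.mem_ker, hq₂k]
        exact hgN
      symm
      calc β₂ y' = β₂ ((e m ((g : ∀ j, G j) m)).val y) := by rw [hg, hh]
        _ = (q₂ g).val (β₂ y) := (hβ₂equi g y).symm
        _ = β₂ y := by rw [hq₂g]; simp
    have claimB : ∀ y y' : (Y m).carrier, β₂ y = β₂ y' → β₁ y = β₁ y' := by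
      intro y y' hββ
      have hfib : ϖY m y = ϖY m y' := by
        rw [← hβ₂over y, ← hβ₂over y', hββ]
      obtain ⟨h, hh⟩ := htransfib y y' hfib
      obtain ⟨g, hg0⟩ := hπsurj m h
      have hg : (g : ∀ j, G j) m = h := hg0
      have h1 : (q₂ g).val (β₂ y) = β₂ y := by
        rw [hβ₂equi g y]
        show β₂ ((e m ((g : ∀ j, G j) m)).val y) = β₂ y
        rw [hg, hh, ← hββ]
      have hq₂g : q₂ g = 1 :=
        Subtype.ext (hfreeW₂ ((q₂ g) : Equiv.Perm W₂.carrier) (q₂ g).2 ⟨β₂ y, h1⟩)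
      have hgN : g ∈ N := by
        rw [← hq₂k]
        exact MonoidHom.mem_ker.mpr hq₂g
      have hq₁g : q₁ g = 1 := by
        rw [← MonoidHom.mem_ker, hq₁k]
        exact hgN
      symm
      calc β₁ y' = β₁ ((e m ((g : ∀ j, G j) m)).val y) := by rw [hg, hh]
        _ = (q₁ g).val (β₁ y) := (hβ₁equi g y).symm
        _ = β₁ y := by rw [hq₁g]; simp
    -- construct the conjugacy
    set f0 : W₁.carrier → W₂.carrier := fun w => β₂ (Function.surjInv hβ₁surj w) with hf0def
    have hf0β : ∀ y, f0 (β₁ y) = β₂ y :=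
      fun y => claimA _ _ (Function.surjInv_eq hβ₁surj (β₁ y))
    have hf0surj : Function.Surjective f0 := by
      intro w
      obtain ⟨y, hy⟩ := hβ₂surj w
      exact ⟨β₁ y, by rw [hf0β y, hy]⟩
    have hf0inj : Function.Injective f0 := by
      intro w w' hww
      obtain ⟨y, rfl⟩ := hβ₁surj w
      obtain ⟨y', rfl⟩ := hβ₁surj w'
      rw [hf0β, hf0β] at hww
      exact claimB y y' hww
    set fE : W₁.carrier ≃ W₂.carrier := Equiv.ofBijective f0 ⟨hf0inj, hf0surj⟩ with hfEdef
    haveI hcYm : CompactSpace (Y m).carrier := Subshift.compactSpace (Y m)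
    haveI hcW₁ : CompactSpace W₁.carrier := Subshift.compactSpace W₁
    have hcont : Continuous f0 := by
      rw [continuous_iff_isClosed]
      intro C hC
      have himgeq : f0 ⁻¹' C = β₁ '' (β₂ ⁻¹' C) := by
        ext w
        constructor
        · intro hw
          refine ⟨Function.surjInv hβ₁surj w, hw, Function.surjInv_eq hβ₁surj w⟩
        · rintro ⟨y, hyC, rfl⟩
          show f0 (β₁ y) ∈ C
          rw [hf0β y]
          exact hyC
      rw [himgeq]
      have hclosed : IsClosed (β₂ ⁻¹' C) := hC.preimage hβ₂cont
      exact (hclosed.isCompact.image hβ₁cont).isClosed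
    have hcontE : Continuous ⇑fE := hcont
    refine ⟨fE, hcontE, ?_, ?_, ?_, ?_⟩
    · rw [continuous_iff_isClosed]
      intro C hC
      have himgeq : ⇑fE.symm ⁻¹' C = ⇑fE '' C := (Equiv.image_eq_preimage_symm fE C).symm
      rw [himgeq]
      exact (hC.isCompact.image hcontE).isClosed
    · intro w
      obtain ⟨y, rfl⟩ := hβ₁surj w
      show f0 (W₁.σ (β₁ y)) = W₂.σ (f0 (β₁ y))
      rw [← hβ₁comm y, hf0β, hf0β, hβ₂comm]
    · show f0 w₁ = w₂
      rw [← hβ₁pt, hf0β, hβ₂pt]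
    · intro w
      obtain ⟨y, rfl⟩ := hβ₁surj w
      show ϖ₂ (f0 (β₁ y)) = ϖ₁ (β₁ y)
      rw [hf0β, hβ₂over, hβ₁over]
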